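/- arXiv:1103.3083 — 3 statements merged into one kernel-verified Lean document; each statement's English description precedes it below -/
import Mathlib

section
/- Let d ≥ 1 be an integer and γ ∈ (1,2]. Then there exists a constant C > 0 depending only on γ such that for every y ∈ ℝ^d, sup over x ∈ ℝ^d of |K̃(x,y)| ≤ C |y|^γ. -/
/-!
Put `a = ‖x‖`, `b = ‖y‖`, `c = ‖x - y‖`. If `a ≤ 2b`, then `a, c ≤ 3b` and `|⟪x, y⟫| ≤ ab`, so every
term of `K̃` is `O(b^γ)`. If `a ≥ 2b`, the polarization identity `2⟪x, y⟫ = a² + b² - c²` gives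
`K̃ = (c^γ - a^γ - γ a^(γ-1) (c - a)) + (γ/2) a^(γ-2) (b² - (c - a)²)`. Since `c ≥ a/2`, the first
bracket is a Taylor remainder bounded by `γ(γ-1) (a/2)^(γ-2) (c - a)²`, and `|c - a| ≤ b` together
with `a^(γ-2) ≤ b^(γ-2)` (as `γ ≤ 2`) bounds both terms by multiples of `b^γ`.
-/

/-- `K̃(x,y) = |x−y|^γ − |x|^γ + γ |x|^{γ−2} (x·y)`, where the last term is
interpreted as `0` when `x = 0` (which is automatic for `Real.rpow` since `γ - 2 ≤ 0`). -/
noncomputable def Ktilde {d : ℕ} (γ : ℝ) (x y : EuclideanSpace ℝ (Fin d)) : ℝ :=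
  ‖x - y‖ ^ γ - ‖x‖ ^ γ + γ * ‖x‖ ^ (γ - 2) * (inner ℝ x y : ℝ)

namespace Real

lemma abs_rpow_sub_rpow_le_mul_abs_sub {q m s u : ℝ} (hq0 : 0 ≤ q) (hq1 : q ≤ 1) (hm : 0 < m)
    (hs : m ≤ s) (hu : m ≤ u) :
    |s ^ q - u ^ q| ≤ q * m ^ (q - 1) * |s - u| := by
  have key := Convex.norm_image_sub_le_of_norm_hasDerivWithin_le
    (f := fun t : ℝ => t ^ q) (f' := fun t => q * t ^ (q - 1)) (s := Set.Ici m)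
    (fun t ht => (hasDerivAt_rpow_const (Or.inl (hm.trans_le ht).ne')).hasDerivWithinAt)
    (fun t ht => by
      rw [norm_mul, norm_of_nonneg hq0, norm_of_nonneg (rpow_nonneg (hm.le.trans ht) _)]
      exact mul_le_mul_of_nonneg_left (rpow_le_rpow_of_nonpos hm ht (by linarith)) hq0)
    (convex_Ici m) hu hs
  simpa only [norm_eq_abs] using key

lemma abs_rpow_sub_rpow_sub_mul_sub_le {p m s u : ℝ} (hp1 : 1 ≤ p) (hp2 : p ≤ 2) (hm : 0 < m)
    (hs : m ≤ s) (hu : m ≤ u) :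
    |s ^ p - u ^ p - p * u ^ (p - 1) * (s - u)| ≤ p * (p - 1) * m ^ (p - 2) * (s - u) ^ 2 := by
  have hmt : ∀ t ∈ Set.uIcc u s, m ≤ t := fun t ht => le_trans (le_min hu hs) ht.1
  have key := Convex.norm_image_sub_le_of_norm_hasDerivWithin_le
    (f := fun t : ℝ => t ^ p - p * u ^ (p - 1) * t)
    (f' := fun t => p * (t ^ (p - 1) - u ^ (p - 1)))
    (s := Set.uIcc u s) (C := p * ((p - 1) * m ^ (p - 2) * |s - u|))
    (fun t ht => by
      have hderiv : HasDerivAt (fun t : ℝ => t ^ p - p * u ^ (p - 1) * t)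
          (p * t ^ (p - 1) - p * u ^ (p - 1) * 1) t :=
        (hasDerivAt_rpow_const (Or.inl (hm.trans_le (hmt t ht)).ne')).sub
          ((hasDerivAt_id' t).const_mul (p * u ^ (p - 1)))
      convert hderiv.hasDerivWithinAt using 1
      ring)
    (fun t ht => by
      rw [norm_mul, norm_of_nonneg (by linarith), norm_eq_abs]
      gcongr
      calc |t ^ (p - 1) - u ^ (p - 1)| ≤ (p - 1) * m ^ (p - 1 - 1) * |t - u| :=
            abs_rpow_sub_rpow_le_mul_abs_sub (by linarith) (by linarith) hm (hmt t ht) hu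
        _ ≤ (p - 1) * m ^ (p - 2) * |s - u| := by
            rw [show p - 1 - 1 = p - 2 by ring]
            exact mul_le_mul_of_nonneg_left (Set.abs_sub_left_of_mem_uIcc ht)
              (mul_nonneg (by linarith) (rpow_nonneg hm.le _)))
    (convex_uIcc u s) Set.left_mem_uIcc Set.right_mem_uIcc
  rw [norm_eq_abs, norm_eq_abs] at key
  calc |s ^ p - u ^ p - p * u ^ (p - 1) * (s - u)|
      = |(s ^ p - p * u ^ (p - 1) * s) - (u ^ p - p * u ^ (p - 1) * u)| := by congr 1; ring
    _ ≤ p * ((p - 1) * m ^ (p - 2) * |s - u|) * |s - u| := key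
    _ = p * (p - 1) * m ^ (p - 2) * (s - u) ^ 2 := by rw [← sq_abs (s - u)]; ring

lemma rpow_sub_two_mul_sq_le {γ a b : ℝ} (hγ : γ ≤ 2) (hb : 0 < b) (hab : b ≤ a) :
    a ^ (γ - 2) * b ^ 2 ≤ b ^ γ := by
  calc a ^ (γ - 2) * b ^ 2 ≤ b ^ (γ - 2) * b ^ 2 :=
        mul_le_mul_of_nonneg_right (rpow_le_rpow_of_nonpos hb hab (by linarith)) (sq_nonneg b)
    _ = b ^ γ := by rw [← rpow_natCast, ← rpow_add hb]; norm_num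

end Real

section Ktilde

open Real

variable {d : ℕ} {γ : ℝ} {x y : EuclideanSpace ℝ (Fin d)}

lemma abs_Ktilde_le_of_norm_le_two_mul (hγ1 : 1 < γ) (hγ2 : γ ≤ 2) (hxy : ‖x‖ ≤ 2 * ‖y‖) :
    |Ktilde γ x y| ≤ 13 * ‖y‖ ^ γ := by
  have hxy' : ‖x - y‖ ≤ 3 * ‖y‖ := by linarith [norm_sub_le x y]
  have hbound : (3 * ‖y‖) ^ γ ≤ 9 * ‖y‖ ^ γ := by
    rw [mul_rpow (by norm_num) (norm_nonneg y)]
    gcongr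
    calc (3 : ℝ) ^ γ ≤ 3 ^ (2 : ℝ) := rpow_le_rpow_of_exponent_le (by norm_num) hγ2
      _ = 9 := by norm_num
  have hdiff : |‖x - y‖ ^ γ - ‖x‖ ^ γ| ≤ 9 * ‖y‖ ^ γ := by
    refine abs_sub_le_of_nonneg_of_le (by positivity) ?_ (by positivity) ?_
    · exact (rpow_le_rpow (norm_nonneg _) hxy' (by linarith)).trans hbound
    · exact (rpow_le_rpow (norm_nonneg _) (by linarith [norm_nonneg y]) (by linarith)).trans hbound
  have hinner : |γ * ‖x‖ ^ (γ - 2) * inner ℝ x y| ≤ 4 * ‖y‖ ^ γ := by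
    calc |γ * ‖x‖ ^ (γ - 2) * inner ℝ x y| = γ * ‖x‖ ^ (γ - 2) * |inner ℝ x y| := by
          rw [abs_mul, abs_of_nonneg (by positivity)]
      _ ≤ γ * ‖x‖ ^ (γ - 2) * (‖x‖ * ‖y‖) := by gcongr; exact abs_real_inner_le_norm x y
      _ = γ * ‖x‖ ^ (γ - 1) * ‖y‖ := by
          rw [show γ - 1 = γ - 2 + 1 by ring, rpow_add_one' (norm_nonneg x) (by linarith)]
          ring
      _ ≤ 2 * (2 * ‖y‖) ^ (γ - 1) * ‖y‖ := by gcongr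
      _ ≤ 2 * (2 * ‖y‖ ^ (γ - 1)) * ‖y‖ := by
          rw [mul_rpow (by norm_num) (norm_nonneg y)]
          gcongr
          calc (2 : ℝ) ^ (γ - 1) ≤ 2 ^ (1 : ℝ) :=
                rpow_le_rpow_of_exponent_le (by norm_num) (by linarith)
            _ = 2 := rpow_one 2
      _ = 4 * ‖y‖ ^ γ := by
          rw [mul_assoc, mul_assoc, ← rpow_add_one' (norm_nonneg y) (by linarith), sub_add_cancel]
          ring
  calc |Ktilde γ x y| ≤ |‖x - y‖ ^ γ - ‖x‖ ^ γ| + |γ * ‖x‖ ^ (γ - 2) * inner ℝ x y| :=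
        abs_add_le _ _
    _ ≤ 9 * ‖y‖ ^ γ + 4 * ‖y‖ ^ γ := add_le_add hdiff hinner
    _ = 13 * ‖y‖ ^ γ := by ring

lemma Ktilde_eq_of_ne_zero (hx : x ≠ 0) :
    Ktilde γ x y = (‖x - y‖ ^ γ - ‖x‖ ^ γ - γ * ‖x‖ ^ (γ - 1) * (‖x - y‖ - ‖x‖))
      + γ / 2 * ‖x‖ ^ (γ - 2) * (‖y‖ ^ 2 - (‖x - y‖ - ‖x‖) ^ 2) := by
  rw [Ktilde, show γ - 1 = γ - 2 + 1 by ring, rpow_add_one (norm_ne_zero_iff.mpr hx)]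
  linear_combination γ / 2 * ‖x‖ ^ (γ - 2) * norm_sub_sq_real x y

lemma abs_Ktilde_le_of_two_mul_norm_le (hγ1 : 1 ≤ γ) (hγ2 : γ ≤ 2) (hy : y ≠ 0)
    (hxy : 2 * ‖y‖ ≤ ‖x‖) :
    |Ktilde γ x y| ≤ 3 * ‖y‖ ^ γ := by
  have hb : 0 < ‖y‖ := norm_pos_iff.mpr hy
  have hca : |‖x - y‖ - ‖x‖| ≤ ‖y‖ := by simpa using abs_norm_sub_norm_le (x - y) x
  rw [Ktilde_eq_of_ne_zero (norm_pos_iff.mp (by linarith))]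
  generalize ‖x‖ = a at *
  generalize ‖y‖ = b at *
  generalize ‖x - y‖ = c at *
  have ha : 0 < a := by linarith
  have hsq : (c - a) ^ 2 ≤ b ^ 2 := sq_le_sq' (abs_le.mp hca).1 (abs_le.mp hca).2
  have htaylor : |c ^ γ - a ^ γ - γ * a ^ (γ - 1) * (c - a)| ≤ 2 * b ^ γ := by
    calc |c ^ γ - a ^ γ - γ * a ^ (γ - 1) * (c - a)|
        ≤ γ * (γ - 1) * (a / 2) ^ (γ - 2) * (c - a) ^ 2 :=
          abs_rpow_sub_rpow_sub_mul_sub_le hγ1 hγ2 (by positivity)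
            (by linarith [(abs_le.mp hca).1]) (by linarith)
      _ ≤ 2 * ((a / 2) ^ (γ - 2) * b ^ 2) := by
          rw [mul_assoc]
          gcongr
          nlinarith
      _ ≤ 2 * b ^ γ := by gcongr; exact rpow_sub_two_mul_sq_le hγ2 hb (by linarith)
  have hrest : |γ / 2 * a ^ (γ - 2) * (b ^ 2 - (c - a) ^ 2)| ≤ b ^ γ := by
    have hnonneg : 0 ≤ b ^ 2 - (c - a) ^ 2 := sub_nonneg.mpr hsq
    calc |γ / 2 * a ^ (γ - 2) * (b ^ 2 - (c - a) ^ 2)|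
        = γ / 2 * a ^ (γ - 2) * (b ^ 2 - (c - a) ^ 2) := abs_of_nonneg (by positivity)
      _ ≤ 1 * (a ^ (γ - 2) * b ^ 2) := by
          rw [mul_assoc]
          gcongr
          · linarith
          · linarith [sq_nonneg (c - a)]
      _ ≤ b ^ γ := by rw [one_mul]; exact rpow_sub_two_mul_sq_le hγ2 hb (by linarith)
  calc _ ≤ |c ^ γ - a ^ γ - γ * a ^ (γ - 1) * (c - a)|
        + |γ / 2 * a ^ (γ - 2) * (b ^ 2 - (c - a) ^ 2)| := abs_add_le _ _
    _ ≤ 2 * b ^ γ + b ^ γ := add_le_add htaylor hrest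
    _ = 3 * b ^ γ := by ring

end Ktilde

theorem stmt_0_general (d : ℕ) (γ : ℝ) (hγ1 : 1 < γ) (hγ2 : γ ≤ 2) :
    ∃ C > (0 : ℝ), ∀ y x : EuclideanSpace ℝ (Fin d),
      |Ktilde γ x y| ≤ C * ‖y‖ ^ γ := by
  refine ⟨13, by norm_num, fun y x => ?_⟩
  rcases eq_or_ne y 0 with rfl | hy
  · simp only [Ktilde, sub_zero, inner_zero_right, mul_zero, add_zero, sub_self, abs_zero,
      norm_zero]
    positivity
  rcases le_total ‖x‖ (2 * ‖y‖) with hxy | hxy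
  · exact abs_Ktilde_le_of_norm_le_two_mul hγ1 hγ2 hxy
  · exact (abs_Ktilde_le_of_two_mul_norm_le hγ1.le hγ2 hy hxy).trans (by gcongr; norm_num)

theorem stmt_0 (d : ℕ) (hd : 1 ≤ d) (γ : ℝ) (hγ1 : 1 < γ) (hγ2 : γ ≤ 2) :
    ∃ C > (0 : ℝ), ∀ y x : EuclideanSpace ℝ (Fin d),
      |Ktilde γ x y| ≤ C * ‖y‖ ^ γ :=
  stmt_0_general d γ hγ1 hγ2
end

section
/- Let d ≥ 1 be an integer, γ ∈ (1,2), and λ ∈ ℝ. Let χ : [0,∞) → ℝ be a smooth nondecreasing function with 0 ≤ χ ≤ 1, χ(r) = 0 for r ≤ 1, and χ(r) = 1 for r ≥ 2. Define K(x,y) = λ χ(|x−y|)|x−y|^γ − λ χ(|x|)|x|^γ + λ γ ⟨x⟩^{γ−2} (x·y). Then there exists a constant C > 0, depending only on γ and λ, such that for all y ∈ ℝ^d, sup over x ∈ ℝ^d of |K(x,y)| ≤ C ⟨y⟩^γ. -/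
open Real

lemma tangent_lower {γ u v : ℝ} (hγ : 1 ≤ γ) (hu : 0 < u) (huv : u ≤ v) :
    γ * u ^ (γ - 1) * (v - u) ≤ v ^ γ - u ^ γ := by
  have hv : 0 < v := hu.trans_le huv
  have hs : (-1 : ℝ) ≤ v / u - 1 := by
    have : 0 ≤ v / u := by positivity
    linarith
  have hB := one_add_mul_self_le_rpow_one_add hs hγ
  have h1 : (1 : ℝ) + (v / u - 1) = v / u := by ring
  rw [h1, Real.div_rpow hv.le hu.le] at hB
  have hug : (0:ℝ) < u ^ γ := rpow_pos_of_pos hu γ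
  have key : (1 + γ * (v / u - 1)) * u ^ γ ≤ v ^ γ := by
    have := mul_le_mul_of_nonneg_right hB hug.le
    rwa [div_mul_cancel₀ _ hug.ne'] at this
  have e1 : u ^ (γ - 1) = u ^ γ / u := Real.rpow_sub_one hu.ne' γ
  have h2 : (1 + γ * (v / u - 1)) * u ^ γ = u ^ γ + γ * (u ^ γ / u) * (v - u) := by
    field_simp
  rw [e1]
  linarith [key, h2 ▸ key]

lemma tangent_upper {γ u v : ℝ} (hγ : 1 ≤ γ) (hu : 0 < u) (huv : u ≤ v) :
    v ^ γ - u ^ γ ≤ γ * v ^ (γ - 1) * (v - u) := by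
  have hv : 0 < v := hu.trans_le huv
  have hs : (-1 : ℝ) ≤ u / v - 1 := by
    have : 0 ≤ u / v := by positivity
    linarith
  have hB := one_add_mul_self_le_rpow_one_add hs hγ
  have h1 : (1 : ℝ) + (u / v - 1) = u / v := by ring
  rw [h1, Real.div_rpow hu.le hv.le] at hB
  have hvg : (0:ℝ) < v ^ γ := rpow_pos_of_pos hv γ
  have key : (1 + γ * (u / v - 1)) * v ^ γ ≤ u ^ γ := by
    have := mul_le_mul_of_nonneg_right hB hvg.le
    rwa [div_mul_cancel₀ _ hvg.ne'] at this
  have e1 : v ^ (γ - 1) = v ^ γ / v := Real.rpow_sub_one hv.ne' γ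
  have h2 : (1 + γ * (u / v - 1)) * v ^ γ = v ^ γ - γ * (v ^ γ / v) * (v - u) := by
    field_simp
    ring
  rw [e1]
  linarith [h2 ▸ key]

lemma concave_upper {p u v : ℝ} (hp0 : 0 ≤ p) (hp1 : p ≤ 1) (hu : 0 < u) (huv : u ≤ v) :
    v ^ p - u ^ p ≤ p * u ^ (p - 1) * (v - u) := by
  have hv : 0 < v := hu.trans_le huv
  have hs : (-1 : ℝ) ≤ v / u - 1 := by
    have : 0 ≤ v / u := by positivity
    linarith
  have hB := rpow_one_add_le_one_add_mul_self hs hp0 hp1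
  have h1 : (1 : ℝ) + (v / u - 1) = v / u := by ring
  rw [h1, Real.div_rpow hv.le hu.le] at hB
  have hug : (0:ℝ) < u ^ p := rpow_pos_of_pos hu p
  have key : v ^ p ≤ (1 + p * (v / u - 1)) * u ^ p := by
    have := mul_le_mul_of_nonneg_right hB hug.le
    rwa [div_mul_cancel₀ _ hug.ne'] at this
  have e1 : u ^ (p - 1) = u ^ p / u := Real.rpow_sub_one hu.ne' p
  have h2 : (1 + p * (v / u - 1)) * u ^ p = u ^ p + p * (u ^ p / u) * (v - u) := by
    field_simp
  rw [e1]
  linarith [h2 ▸ key]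

set_option maxHeartbeats 2000000

lemma key_E {γ a b m : ℝ} (hγ1 : 1 ≤ γ) (hγ2 : γ ≤ 2) (hm : 0 < m)
    (hma : m ≤ a) (hmb : m ≤ b) :
    |b ^ γ - a ^ γ - γ * a ^ (γ - 1) * (b - a)| ≤ γ * (γ - 1) * m ^ (γ - 2) * (b - a) ^ 2 := by
  have ha : 0 < a := hm.trans_le hma
  have hb : 0 < b := hm.trans_le hmb
  have he : γ - 1 - 1 = γ - 2 := by ring
  rcases le_total a b with hab | hab
  · have h0 : 0 ≤ b ^ γ - a ^ γ - γ * a ^ (γ - 1) * (b - a) := by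
      linarith [tangent_lower hγ1 ha hab]
    rw [abs_of_nonneg h0]
    have h1 := tangent_upper hγ1 ha hab
    have h2 := concave_upper (p := γ - 1) (by linarith) (by linarith) ha hab
    rw [he] at h2
    have h3 : a ^ (γ - 2) ≤ m ^ (γ - 2) :=
      rpow_le_rpow_of_nonpos hm hma (by linarith)
    have h4 : b ^ γ - a ^ γ - γ * a ^ (γ - 1) * (b - a)
        ≤ γ * (b ^ (γ - 1) - a ^ (γ - 1)) * (b - a) := by nlinarith
    have h5 := mul_le_mul_of_nonneg_left
      (mul_le_mul_of_nonneg_right h2 (show (0:ℝ) ≤ b - a by linarith))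
      (show (0:ℝ) ≤ γ by linarith)
    have h6 := mul_le_mul_of_nonneg_left
      (mul_le_mul_of_nonneg_right h3 (sq_nonneg (b - a)))
      (show (0:ℝ) ≤ γ * (γ - 1) by nlinarith)
    nlinarith [h5, h6]
  · have h0 : 0 ≤ b ^ γ - a ^ γ - γ * a ^ (γ - 1) * (b - a) := by
      linarith [tangent_upper hγ1 hb hab]
    rw [abs_of_nonneg h0]
    have h1 := tangent_lower hγ1 hb hab
    have h2 := concave_upper (p := γ - 1) (by linarith) (by linarith) hb hab
    rw [he] at h2
    have h3 : b ^ (γ - 2) ≤ m ^ (γ - 2) :=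
      rpow_le_rpow_of_nonpos hm hmb (by linarith)
    have h4 : b ^ γ - a ^ γ - γ * a ^ (γ - 1) * (b - a)
        ≤ γ * (a ^ (γ - 1) - b ^ (γ - 1)) * (a - b) := by nlinarith
    have h5 := mul_le_mul_of_nonneg_left
      (mul_le_mul_of_nonneg_right h2 (show (0:ℝ) ≤ a - b by linarith))
      (show (0:ℝ) ≤ γ by linarith)
    have h6 := mul_le_mul_of_nonneg_left
      (mul_le_mul_of_nonneg_right h3 (sq_nonneg (a - b)))
      (show (0:ℝ) ≤ γ * (γ - 1) by nlinarith)
    nlinarith [h5, h6]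

lemma A_diff {γ a : ℝ} (hγ1 : 1 ≤ γ) (hγ2 : γ ≤ 2) (ha : 1 ≤ a) :
    Real.sqrt (1 + a ^ 2) ^ (γ - 2) ≤ a ^ (γ - 2) ∧
      a ^ (γ - 2) - Real.sqrt (1 + a ^ 2) ^ (γ - 2) ≤ a ^ (γ - 4) := by
  have ha0 : (0:ℝ) < a := by linarith
  set A := Real.sqrt (1 + a ^ 2) with hA
  have hA0 : 0 < A := Real.sqrt_pos.2 (by positivity)
  have hAsq : A ^ 2 = 1 + a ^ 2 := Real.sq_sqrt (by positivity)
  have haA : a ≤ A := by nlinarith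
  constructor
  · exact rpow_le_rpow_of_nonpos ha0 haA (by linarith)
  · set t := a / A with ht
    have ht0 : 0 < t := by positivity
    have ht1 : t ≤ 1 := by rw [ht, div_le_one hA0]; exact haA
    have hmul : A ^ (γ - 2) = a ^ (γ - 2) * t ^ (2 - γ) := by
      have h1 : A = a * (A / a) := by field_simp
      rw [h1, Real.mul_rpow ha0.le (by positivity)]
      congr 1
      have h2 : A / a = t⁻¹ := by rw [ht]; field_simp
      rw [h2, Real.inv_rpow ht0.le, ← Real.rpow_neg ht0.le,
        show -(γ - 2) = 2 - γ by ring]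
    have htw : t ^ (2:ℝ) ≤ t ^ (2 - γ) :=
      rpow_le_rpow_of_exponent_ge ht0 ht1 (by linarith)
    have ht2 : t ^ (2:ℝ) = a ^ 2 / (1 + a ^ 2) := by
      rw [Real.rpow_two, ht, div_pow, hAsq]
    have hp : (0:ℝ) < a ^ (γ - 2) := rpow_pos_of_pos ha0 _
    have hge : a ^ (γ - 2) * (a ^ 2 / (1 + a ^ 2)) ≤ A ^ (γ - 2) := by
      rw [hmul]
      exact mul_le_mul_of_nonneg_left (ht2 ▸ htw) hp.le
    have h4 : a ^ (γ - 4) = a ^ (γ - 2) / a ^ 2 := by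
      rw [show γ - 4 = γ - 2 - 2 by ring, Real.rpow_sub ha0, Real.rpow_two]
    have h5 : a ^ (γ - 2) - a ^ (γ - 2) * (a ^ 2 / (1 + a ^ 2))
        = a ^ (γ - 2) / (1 + a ^ 2) := by
      field_simp
      ring
    have h6 : a ^ (γ - 2) / (1 + a ^ 2) ≤ a ^ (γ - 2) / a ^ 2 := by
      gcongr
      · linarith
    rw [h4]; linarith [h6, hge, h5]

lemma real_est (γ : ℝ) (hγ1 : 1 < γ) (hγ2 : γ < 2) (lam : ℝ)
    (χ : ℝ → ℝ) (hχ0 : ∀ r, 0 ≤ χ r) (hχ1 : ∀ r, χ r ≤ 1)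
    (hχhigh : ∀ r : ℝ, 2 ≤ r → χ r = 1)
    (a b n p : ℝ) (ha0 : 0 ≤ a) (hb0 : 0 ≤ b) (hn0 : 0 ≤ n)
    (hba : |b - a| ≤ n) (hbid : b ^ 2 = a ^ 2 - 2 * p + n ^ 2) (hpan : |p| ≤ a * n) :
    |lam * χ b * b ^ γ - lam * χ a * a ^ γ
        + lam * γ * Real.sqrt (1 + a ^ 2) ^ (γ - 2) * p|
      ≤ 100 * (|lam| + 1) * Real.sqrt (1 + n ^ 2) ^ γ := by
  set Y := Real.sqrt (1 + n ^ 2) with hYdef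
  set A := Real.sqrt (1 + a ^ 2) with hAdef
  have hY1 : 1 ≤ Y := by
    rw [hYdef, Real.one_le_sqrt]; linarith [sq_nonneg n]
  have hY0 : (0:ℝ) < Y := by linarith
  have hYsq : Y ^ 2 = 1 + n ^ 2 := Real.sq_sqrt (by positivity)
  have hnY : n ≤ Y := by
    rw [hYdef]
    exact (Real.le_sqrt hn0 (by positivity)).mpr (by linarith)
  have hYg0 : (0:ℝ) ≤ Y ^ γ := (rpow_pos_of_pos hY0 γ).le
  have hYgY : Y ≤ Y ^ γ := by
    nth_rewrite 1 [← Real.rpow_one Y]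
    exact rpow_le_rpow_of_exponent_le hY1 (by linarith)
  have hA0 : (0:ℝ) < A := by rw [hAdef]; positivity
  have hAsq : A ^ 2 = 1 + a ^ 2 := Real.sq_sqrt (by positivity)
  have haA : a ≤ A := by
    rw [hAdef]
    exact (Real.le_sqrt ha0 (by positivity)).mpr (by linarith)
  have hlam0 : (0:ℝ) ≤ |lam| := abs_nonneg lam
  have hγ0 : (0:ℝ) < γ := by linarith
  rcases le_or_gt a (2 * n + 4) with hcase | hcase
  · -- small x regime: crude bounds
    have hbn : b ≤ a + n := by
      have := abs_le.1 hba
      linarith [this.2]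
    have hb7 : b ≤ 7 * Y := by linarith
    have ha6 : a ≤ 6 * Y := by linarith
    have hbg : b ^ γ ≤ 49 * Y ^ γ := by
      calc b ^ γ ≤ (7 * Y) ^ γ := rpow_le_rpow hb0 hb7 (by linarith)
        _ = 7 ^ γ * Y ^ γ := Real.mul_rpow (by norm_num) hY0.le
        _ ≤ 49 * Y ^ γ := by
            have h1 : (7:ℝ) ^ γ ≤ 7 ^ (2:ℝ) :=
              rpow_le_rpow_of_exponent_le (by norm_num) (by linarith)
            have h2 : (7:ℝ) ^ (2:ℝ) = 49 := by
              rw [Real.rpow_two]; norm_num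
            calc (7:ℝ) ^ γ * Y ^ γ ≤ 7 ^ (2:ℝ) * Y ^ γ :=
                  mul_le_mul_of_nonneg_right h1 hYg0
              _ = 49 * Y ^ γ := by rw [h2]
    have hag : a ^ γ ≤ 36 * Y ^ γ := by
      calc a ^ γ ≤ (6 * Y) ^ γ := rpow_le_rpow ha0 ha6 (by linarith)
        _ = 6 ^ γ * Y ^ γ := Real.mul_rpow (by norm_num) hY0.le
        _ ≤ 36 * Y ^ γ := by
            have h1 : (6:ℝ) ^ γ ≤ 6 ^ (2:ℝ) :=
              rpow_le_rpow_of_exponent_le (by norm_num) (by linarith)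
            have h2 : (6:ℝ) ^ (2:ℝ) = 36 := by
              rw [Real.rpow_two]; norm_num
            calc (6:ℝ) ^ γ * Y ^ γ ≤ 6 ^ (2:ℝ) * Y ^ γ :=
                  mul_le_mul_of_nonneg_right h1 hYg0
              _ = 36 * Y ^ γ := by rw [h2]
    have hA7 : A ≤ 7 * Y := by
      have h1 : A ≤ 1 + a := by
        rw [hAdef]
        calc Real.sqrt (1 + a ^ 2) ≤ Real.sqrt ((1 + a) ^ 2) :=
              Real.sqrt_le_sqrt (by linarith [sq_nonneg a, ha0])
          _ = 1 + a := Real.sqrt_sq (by linarith)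
      linarith
    have hthird : A ^ (γ - 2) * |p| ≤ 7 * Y ^ γ := by
      have e1 : A ^ (γ - 1) = A ^ (γ - 2) * A := by
        rw [show γ - 1 = γ - 2 + 1 by ring, Real.rpow_add_one hA0.ne']
      have h1 : A ^ (γ - 2) * |p| ≤ A ^ (γ - 2) * (a * n) :=
        mul_le_mul_of_nonneg_left hpan (rpow_nonneg hA0.le _)
      have h2 : A ^ (γ - 2) * (a * n) ≤ A ^ (γ - 1) * n := by
        rw [e1]
        have h := mul_le_mul_of_nonneg_left haA (rpow_nonneg hA0.le (γ - 2))
        calc A ^ (γ - 2) * (a * n) = (A ^ (γ - 2) * a) * n := by ring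
          _ ≤ (A ^ (γ - 2) * A) * n := mul_le_mul_of_nonneg_right h hn0
      have h3 : A ^ (γ - 1) ≤ 7 * Y ^ (γ - 1) := by
        calc A ^ (γ - 1) ≤ (7 * Y) ^ (γ - 1) :=
              rpow_le_rpow hA0.le hA7 (by linarith)
          _ = 7 ^ (γ - 1) * Y ^ (γ - 1) := Real.mul_rpow (by norm_num) hY0.le
          _ ≤ 7 * Y ^ (γ - 1) := by
              have h4 : (7:ℝ) ^ (γ - 1) ≤ 7 ^ (1:ℝ) :=
                rpow_le_rpow_of_exponent_le (by norm_num) (by linarith)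
              rw [Real.rpow_one] at h4
              exact mul_le_mul_of_nonneg_right h4 (rpow_nonneg hY0.le (γ - 1))
      have h5 : Y ^ (γ - 1) * Y = Y ^ γ := by
        rw [← Real.rpow_add_one hY0.ne', show γ - 1 + 1 = γ by ring]
      have h6 : A ^ (γ - 1) * n ≤ 7 * Y ^ γ := by
        calc A ^ (γ - 1) * n ≤ (7 * Y ^ (γ - 1)) * Y := by
              apply mul_le_mul h3 hnY hn0
              positivity
          _ = 7 * Y ^ γ := by rw [mul_assoc, h5]
      linarith
    -- assemble
    have habs : |lam * χ b * b ^ γ - lam * χ a * a ^ γ + lam * γ * A ^ (γ - 2) * p|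
        ≤ |lam * χ b * b ^ γ| + |lam * χ a * a ^ γ| + |lam * γ * A ^ (γ - 2) * p| := by
      calc _ ≤ |lam * χ b * b ^ γ - lam * χ a * a ^ γ| + |lam * γ * A ^ (γ - 2) * p| :=
            abs_add_le _ _
        _ ≤ _ := by linarith [abs_sub (lam * χ b * b ^ γ) (lam * χ a * a ^ γ)]
    have h1 : |lam * χ b * b ^ γ| ≤ |lam| * (49 * Y ^ γ) := by
      rw [abs_mul, abs_mul, abs_of_nonneg (hχ0 b), abs_of_nonneg (rpow_nonneg hb0 γ),
        mul_assoc]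
      refine mul_le_mul_of_nonneg_left ?_ hlam0
      calc χ b * b ^ γ ≤ b ^ γ := mul_le_of_le_one_left (rpow_nonneg hb0 γ) (hχ1 b)
        _ ≤ 49 * Y ^ γ := hbg
    have h2 : |lam * χ a * a ^ γ| ≤ |lam| * (36 * Y ^ γ) := by
      rw [abs_mul, abs_mul, abs_of_nonneg (hχ0 a), abs_of_nonneg (rpow_nonneg ha0 γ),
        mul_assoc]
      refine mul_le_mul_of_nonneg_left ?_ hlam0
      calc χ a * a ^ γ ≤ a ^ γ := mul_le_of_le_one_left (rpow_nonneg ha0 γ) (hχ1 a)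
        _ ≤ 36 * Y ^ γ := hag
    have h3 : |lam * γ * A ^ (γ - 2) * p| ≤ |lam| * (14 * Y ^ γ) := by
      rw [abs_mul, abs_mul, abs_mul, abs_of_nonneg hγ0.le,
        abs_of_nonneg (rpow_nonneg hA0.le (γ - 2))]
      have h := mul_le_mul_of_nonneg_left hthird (show (0:ℝ) ≤ |lam| * γ by positivity)
      have w : (0:ℝ) ≤ |lam| * (2 - γ) * Y ^ γ :=
        mul_nonneg (mul_nonneg hlam0 (by linarith)) hYg0
      calc |lam| * γ * A ^ (γ - 2) * |p| = |lam| * γ * (A ^ (γ - 2) * |p|) := by ring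
        _ ≤ |lam| * γ * (7 * Y ^ γ) := h
        _ ≤ |lam| * (14 * Y ^ γ) := by linarith [w]
    have w1 : (0:ℝ) ≤ |lam| * Y ^ γ := mul_nonneg hlam0 hYg0
    linarith [habs, h1, h2, h3, w1, hYg0]
  · -- large x regime
    have ha4 : (4:ℝ) ≤ a := by linarith
    have ha1 : (1:ℝ) ≤ a := by linarith
    have hapos : (0:ℝ) < a := by linarith
    have hbge : a - n ≤ b := by
      have := abs_le.1 hba
      linarith [this.1]
    have hb2 : a / 2 + 2 ≤ b := by linarith
    have hbpos : (0:ℝ) < b := by linarith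
    have habpos : (0:ℝ) < a + b := by linarith
    have hχa : χ a = 1 := hχhigh a (by linarith)
    have hχb : χ b = 1 := hχhigh b (by linarith)
    have haY : Y ≤ a := by
      have h1 : Y ≤ 1 + n := by
        rw [hYdef]
        calc Real.sqrt (1 + n ^ 2) ≤ Real.sqrt ((1 + n) ^ 2) :=
              Real.sqrt_le_sqrt (by linarith [sq_nonneg n, hn0])
          _ = 1 + n := Real.sqrt_sq (by linarith)
      linarith
    rw [hχa, hχb]
    -- rpow exponent arithmetic
    have epow2 : a ^ (γ - 2) = a ^ (γ - 1) / a := by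
      rw [show γ - 2 = γ - 1 - 1 by ring, Real.rpow_sub_one hapos.ne']
    have epow4 : a ^ (γ - 4) = a ^ (γ - 3) / a := by
      rw [show γ - 4 = γ - 3 - 1 by ring, Real.rpow_sub_one hapos.ne']
    have epow3 : a ^ (γ - 3) = a ^ (γ - 2) / a := by
      rw [show γ - 3 = γ - 2 - 1 by ring, Real.rpow_sub_one hapos.ne']
    have hp1pos : (0:ℝ) < a ^ (γ - 1) := rpow_pos_of_pos hapos _
    have hp2pos : (0:ℝ) < a ^ (γ - 2) := rpow_pos_of_pos hapos _
    have hp3pos : (0:ℝ) < a ^ (γ - 3) := rpow_pos_of_pos hapos _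
    -- key quadratic bound  a^{γ-2} n² ≤ Y^γ
    have hag2 : a ^ (γ - 2) ≤ Y ^ (γ - 2) :=
      rpow_le_rpow_of_nonpos hY0 haY (by linarith)
    have hYy : Y ^ (γ - 2) * Y ^ 2 = Y ^ γ := by
      have h := (Real.rpow_add hY0 (γ - 2) 2).symm
      rw [Real.rpow_two] at h
      rw [show γ - 2 + 2 = γ by ring] at h
      exact h
    have hE2 : a ^ (γ - 2) * n ^ 2 ≤ Y ^ γ := by
      calc a ^ (γ - 2) * n ^ 2 ≤ Y ^ (γ - 2) * Y ^ 2 := by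
            apply mul_le_mul hag2 (by linarith [hYsq]) (by positivity)
              (rpow_nonneg hY0.le _)
        _ = Y ^ γ := hYy
    -- bound on E
    have key := key_E (a := a) (b := b) (m := a / 2) hγ1.le hγ2.le
      (by linarith) (by linarith) (by linarith)
    have hba2 : (b - a) ^ 2 ≤ n ^ 2 := by
      have h := pow_le_pow_left₀ (abs_nonneg (b - a)) hba 2
      rwa [sq_abs] at h
    have hm2 : (a / 2) ^ (γ - 2) ≤ 2 * a ^ (γ - 2) := by
      rw [Real.div_rpow ha0 (by norm_num)]
      have h2e : (1:ℝ) / 2 ≤ 2 ^ (γ - 2) := by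
        have h := rpow_le_rpow_of_exponent_le (show (1:ℝ) ≤ 2 by norm_num)
          (show (-1:ℝ) ≤ γ - 2 by linarith)
        rw [Real.rpow_neg_one] at h
        norm_num at h ⊢
        linarith
      calc a ^ (γ - 2) / 2 ^ (γ - 2) ≤ a ^ (γ - 2) / (1 / 2) :=
            div_le_div_of_nonneg_left hp2pos.le (by norm_num) h2e
        _ = 2 * a ^ (γ - 2) := by ring
    have hEfinal : |b ^ γ - a ^ γ - γ * a ^ (γ - 1) * (b - a)| ≤ 2 * γ * Y ^ γ := by
      have c0 : (a / 2) ^ (γ - 2) * (b - a) ^ 2 ≤ 2 * a ^ (γ - 2) * n ^ 2 := by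
        apply mul_le_mul hm2 hba2 (sq_nonneg _) (by positivity)
      have c1 := mul_le_mul_of_nonneg_left c0
        (mul_nonneg (by linarith : (0:ℝ) ≤ γ) (by linarith : (0:ℝ) ≤ γ - 1))
      have c2 : γ * (γ - 1) * (2 * a ^ (γ - 2) * n ^ 2) ≤ 2 * γ * (a ^ (γ - 2) * n ^ 2) := by
        have h0 : (0:ℝ) ≤ γ * (2 - γ) * (a ^ (γ - 2) * n ^ 2) := by
          apply mul_nonneg (mul_nonneg (by linarith) (by linarith))
          positivity
        linarith [h0]
      have c3 := mul_le_mul_of_nonneg_left hE2 (show (0:ℝ) ≤ 2 * γ by linarith)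
      calc |b ^ γ - a ^ γ - γ * a ^ (γ - 1) * (b - a)|
          ≤ γ * (γ - 1) * (a / 2) ^ (γ - 2) * (b - a) ^ 2 := key
        _ ≤ 2 * γ * Y ^ γ := by linarith [c1, c2, c3]
    -- bound on S
    have hbaid : b - a = (n ^ 2 - 2 * p) / (a + b) := by
      rw [eq_div_iff habpos.ne']
      linear_combination hbid
    have hSe : a ^ (γ - 1) * (b - a) + A ^ (γ - 2) * p
        = a ^ (γ - 1) * n ^ 2 / (a + b) + p * (A ^ (γ - 2) - a ^ (γ - 2))
          + p * (a ^ (γ - 1) * (b - a) / (a * (a + b))) := by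
      rw [epow2]
      nth_rewrite 1 [hbaid]
      field_simp
      ring
    have hs1 : a ^ (γ - 1) * n ^ 2 / (a + b) ≤ Y ^ γ := by
      calc a ^ (γ - 1) * n ^ 2 / (a + b) ≤ a ^ (γ - 1) * n ^ 2 / a :=
            div_le_div_of_nonneg_left (by positivity) hapos (by linarith)
        _ = a ^ (γ - 2) * n ^ 2 := by rw [epow2]; ring
        _ ≤ Y ^ γ := hE2
    have hAd := A_diff (a := a) hγ1.le hγ2.le ha1
    have hs2 : |p * (A ^ (γ - 2) - a ^ (γ - 2))| ≤ Y ^ γ := by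
      have hd : |A ^ (γ - 2) - a ^ (γ - 2)| ≤ a ^ (γ - 4) := by
        rw [abs_sub_comm]
        rw [abs_of_nonneg (by linarith [hAd.1])]
        exact hAd.2
      calc |p * (A ^ (γ - 2) - a ^ (γ - 2))|
          = |p| * |A ^ (γ - 2) - a ^ (γ - 2)| := abs_mul _ _
        _ ≤ (a * n) * a ^ (γ - 4) := by
            apply mul_le_mul hpan hd (abs_nonneg _) (by positivity)
        _ = a ^ (γ - 3) * n := by rw [epow4]; field_simp
        _ ≤ 1 * Y := by
            apply mul_le_mul _ hnY hn0 (by norm_num)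
            exact rpow_le_one_of_one_le_of_nonpos ha1 (by linarith)
        _ ≤ Y ^ γ := by linarith
    have hs3 : |p * (a ^ (γ - 1) * (b - a) / (a * (a + b)))| ≤ Y ^ γ := by
      have e : |p * (a ^ (γ - 1) * (b - a) / (a * (a + b)))|
          = |p| * (a ^ (γ - 1) * |b - a| / (a * (a + b))) := by
        rw [abs_mul, abs_div, abs_mul, abs_of_nonneg hp1pos.le,
          abs_of_pos (by positivity : (0:ℝ) < a * (a + b))]
      rw [e]
      calc |p| * (a ^ (γ - 1) * |b - a| / (a * (a + b)))
          ≤ (a * n) * (a ^ (γ - 1) * n / (a * a)) := by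
            apply mul_le_mul hpan ?_ (by positivity) (by positivity)
            apply div_le_div₀ (by positivity)
              (mul_le_mul_of_nonneg_left hba hp1pos.le) (by positivity)
              (mul_le_mul_of_nonneg_left (by linarith : a ≤ a + b) hapos.le)
        _ = a ^ (γ - 2) * n ^ 2 := by rw [epow2]; field_simp
        _ ≤ Y ^ γ := hE2
    have hS : |a ^ (γ - 1) * (b - a) + A ^ (γ - 2) * p| ≤ 3 * Y ^ γ := by
      rw [hSe]
      have t1 : |a ^ (γ - 1) * n ^ 2 / (a + b)| = a ^ (γ - 1) * n ^ 2 / (a + b) :=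
        abs_of_nonneg (by positivity)
      calc |a ^ (γ - 1) * n ^ 2 / (a + b) + p * (A ^ (γ - 2) - a ^ (γ - 2))
            + p * (a ^ (γ - 1) * (b - a) / (a * (a + b)))|
          ≤ |a ^ (γ - 1) * n ^ 2 / (a + b) + p * (A ^ (γ - 2) - a ^ (γ - 2))|
            + |p * (a ^ (γ - 1) * (b - a) / (a * (a + b)))| := abs_add_le _ _
        _ ≤ |a ^ (γ - 1) * n ^ 2 / (a + b)| + |p * (A ^ (γ - 2) - a ^ (γ - 2))|
            + |p * (a ^ (γ - 1) * (b - a) / (a * (a + b)))| := by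
              linarith [abs_add_le (a ^ (γ - 1) * n ^ 2 / (a + b))
                (p * (A ^ (γ - 2) - a ^ (γ - 2)))]
        _ ≤ 3 * Y ^ γ := by
              rw [t1]
              linarith
    -- assemble
    have hsplit : lam * 1 * b ^ γ - lam * 1 * a ^ γ + lam * γ * A ^ (γ - 2) * p
        = lam * (b ^ γ - a ^ γ - γ * a ^ (γ - 1) * (b - a))
          + lam * γ * (a ^ (γ - 1) * (b - a) + A ^ (γ - 2) * p) := by ring
    rw [hsplit]
    calc |lam * (b ^ γ - a ^ γ - γ * a ^ (γ - 1) * (b - a))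
          + lam * γ * (a ^ (γ - 1) * (b - a) + A ^ (γ - 2) * p)|
        ≤ |lam| * |b ^ γ - a ^ γ - γ * a ^ (γ - 1) * (b - a)|
          + |lam| * γ * |a ^ (γ - 1) * (b - a) + A ^ (γ - 2) * p| := by
          have := abs_add_le (lam * (b ^ γ - a ^ γ - γ * a ^ (γ - 1) * (b - a)))
            (lam * γ * (a ^ (γ - 1) * (b - a) + A ^ (γ - 2) * p))
          rw [abs_mul, abs_mul, abs_mul, abs_of_nonneg hγ0.le] at this
          linarith
      _ ≤ |lam| * (2 * γ * Y ^ γ) + |lam| * γ * (3 * Y ^ γ) := by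
          have u1 := mul_le_mul_of_nonneg_left hEfinal hlam0
          have u2 := mul_le_mul_of_nonneg_left hS (show (0:ℝ) ≤ |lam| * γ by positivity)
          linarith [u1, u2]
      _ ≤ 100 * (|lam| + 1) * Y ^ γ := by
          have w : (0:ℝ) ≤ |lam| * (2 - γ) * Y ^ γ :=
            mul_nonneg (mul_nonneg hlam0 (by linarith)) hYg0
          have w2 : (0:ℝ) ≤ |lam| * Y ^ γ := mul_nonneg hlam0 hYg0
          linarith [w, w2, hYg0]

theorem stmt_5 (d : ℕ) (hd : 1 ≤ d) (γ : ℝ) (hγ1 : 1 < γ) (hγ2 : γ < 2) (lam : ℝ)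
    (χ : ℝ → ℝ) (hχsmooth : ContDiff ℝ (⊤ : ℕ∞) χ) (hχmono : Monotone χ)
    (hχ0 : ∀ r, 0 ≤ χ r) (hχ1 : ∀ r, χ r ≤ 1)
    (hχlow : ∀ r : ℝ, r ≤ 1 → χ r = 0) (hχhigh : ∀ r : ℝ, 2 ≤ r → χ r = 1)
    (K : EuclideanSpace ℝ (Fin d) → EuclideanSpace ℝ (Fin d) → ℝ)
    (hK : K = fun x y =>
      lam * χ ‖x - y‖ * ‖x - y‖ ^ γ - lam * χ ‖x‖ * ‖x‖ ^ γ
        + lam * γ * Real.sqrt (1 + ‖x‖ ^ 2) ^ (γ - 2) * (inner ℝ x y : ℝ)) :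
    ∃ C > (0 : ℝ), ∀ y x : EuclideanSpace ℝ (Fin d),
      |K x y| ≤ C * Real.sqrt (1 + ‖y‖ ^ 2) ^ γ := by
  refine ⟨100 * (|lam| + 1), by positivity, ?_⟩
  intro y x
  rw [hK]
  have hba : |‖x - y‖ - ‖x‖| ≤ ‖y‖ := by
    have h := abs_norm_sub_norm_le (x - y) x
    simpa using h
  exact real_est γ hγ1 hγ2 lam χ hχ0 hχ1 hχhigh ‖x‖ ‖x - y‖ ‖y‖ (inner ℝ x y)
    (norm_nonneg x) (norm_nonneg _) (norm_nonneg y) hba (norm_sub_sq_real x y)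
    (abs_real_inner_le_norm x y)
end

section
/- Let d ≥ 1 be an integer and γ ∈ (1,2). Then for every x ∈ ℝ^d with |x| ≥ 1 and every y ∈ ℝ^d, one has | ( |x|^{γ−2} − ⟨x⟩^{γ−2} ) (x·y) | ≤ ((2−γ)/2) |y|. -/
/-! With `α = 2 - γ ≥ 0`, `r = |x|` and `s = ⟨x⟩`, Cauchy–Schwarz reduces the claim to
`(r^{-α} - s^{-α}) r ≤ α / 2`. The tangent-line bound for the convex function `t ↦ t^{-α}` gives
`r^{-α} - s^{-α} ≤ α r^{-α-1} (s - r)`, and `r^{-α} ≤ 1`, `s - r ≤ 1/2` once `r ≥ 1`. -/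

open Real

namespace Real

theorem one_sub_mul_sub_one_le_rpow_neg {x α : ℝ} (hx : 0 < x) (hα : 0 ≤ α) :
    1 - α * (x - 1) ≤ x ^ (-α) := by
  rw [rpow_def_of_pos hx]
  calc 1 - α * (x - 1) ≤ log x * -α + 1 := by nlinarith [log_le_sub_one_of_pos hx]
    _ ≤ exp (log x * -α) := add_one_le_exp _

theorem rpow_neg_sub_rpow_neg_le {r s α : ℝ} (hr : 0 < r) (hs : 0 < s) (hα : 0 ≤ α) :
    r ^ (-α) - s ^ (-α) ≤ α * r ^ (-α) * (s - r) / r := by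
  have hsr : s ^ (-α) = r ^ (-α) * (s / r) ^ (-α) := by
    rw [div_rpow hs.le hr.le, mul_div_cancel₀ _ (rpow_pos_of_pos hr _).ne']
  have hbern := one_sub_mul_sub_one_le_rpow_neg (div_pos hs hr) hα
  have hsub : s / r - 1 = (s - r) / r := by field_simp
  rw [hsr, mul_div_assoc, ← hsub]
  nlinarith [rpow_pos_of_pos hr (-α)]

theorem sqrt_one_add_sq_sub_le_half {r : ℝ} (hr : 3 / 4 ≤ r) : √(1 + r ^ 2) - r ≤ 1 / 2 := by
  rw [sub_le_iff_le_add, sqrt_le_left (by linarith)]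
  nlinarith

theorem rpow_neg_sub_sqrt_one_add_sq_rpow_neg_mul_le {r α : ℝ} (hr : 1 ≤ r) (hα : 0 ≤ α) :
    (r ^ (-α) - √(1 + r ^ 2) ^ (-α)) * r ≤ α / 2 := by
  have hr0 : 0 < r := by linarith
  have hs0 : 0 < √(1 + r ^ 2) := sqrt_pos.2 (by positivity)
  have htangent := mul_le_mul_of_nonneg_right (rpow_neg_sub_rpow_neg_le hr0 hs0 hα) hr0.le
  rw [div_mul_cancel₀ _ hr0.ne'] at htangent
  have hpow : r ^ (-α) ≤ 1 := rpow_le_one_of_one_le_of_nonpos hr (neg_nonpos.2 hα)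
  have hgap := sqrt_one_add_sq_sub_le_half (r := r) (by linarith)
  have hgap0 : 0 ≤ √(1 + r ^ 2) - r := by
    rw [sub_nonneg]; exact le_sqrt_of_sq_le (by linarith)
  calc _ ≤ α * r ^ (-α) * (√(1 + r ^ 2) - r) := htangent
    _ ≤ α * 1 * (1 / 2) := by gcongr
    _ = α / 2 := by ring

end Real

theorem stmt_8_general (d : ℕ) (γ : ℝ) (hγ2 : γ < 2)
    (x y : EuclideanSpace ℝ (Fin d)) (hx : 1 ≤ ‖x‖) :
    |(‖x‖ ^ (γ - 2) - Real.sqrt (1 + ‖x‖ ^ 2) ^ (γ - 2)) * (inner ℝ x y : ℝ)|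
      ≤ (2 - γ) / 2 * ‖y‖ := by
  have hγ : γ - 2 = -(2 - γ) := by ring
  have hα : 0 ≤ 2 - γ := by linarith
  rw [hγ]
  have hdiff : 0 ≤ ‖x‖ ^ (-(2 - γ)) - √(1 + ‖x‖ ^ 2) ^ (-(2 - γ)) :=
    sub_nonneg.2 <| rpow_le_rpow_of_nonpos (by linarith)
      (le_sqrt_of_sq_le (by linarith)) (neg_nonpos.2 hα)
  calc _ = (‖x‖ ^ (-(2 - γ)) - √(1 + ‖x‖ ^ 2) ^ (-(2 - γ))) * |(inner ℝ x y : ℝ)| := by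
        rw [abs_mul, abs_of_nonneg hdiff]
    _ ≤ (‖x‖ ^ (-(2 - γ)) - √(1 + ‖x‖ ^ 2) ^ (-(2 - γ))) * (‖x‖ * ‖y‖) := by
        gcongr; exact abs_real_inner_le_norm x y
    _ = (‖x‖ ^ (-(2 - γ)) - √(1 + ‖x‖ ^ 2) ^ (-(2 - γ))) * ‖x‖ * ‖y‖ := by ring
    _ ≤ (2 - γ) / 2 * ‖y‖ := by
        gcongr; exact rpow_neg_sub_sqrt_one_add_sq_rpow_neg_mul_le hx hα

theorem stmt_8 (d : ℕ) (hd : 1 ≤ d) (γ : ℝ) (hγ1 : 1 < γ) (hγ2 : γ < 2)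
    (x y : EuclideanSpace ℝ (Fin d)) (hx : 1 ≤ ‖x‖) :
    |(‖x‖ ^ (γ - 2) - Real.sqrt (1 + ‖x‖ ^ 2) ^ (γ - 2)) * (inner ℝ x y : ℝ)|
      ≤ (2 - γ) / 2 * ‖y‖ :=
  stmt_8_general d γ hγ2 x y hx
end
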